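/- arXiv:1706.00182 — 3 statements merged into one kernel-verified Lean document; each statement's English description precedes it below -/
import Mathlib

section
/- The Gudermannian-type function ψ(u) = 2·arctan(exp(u)) − π/2 satisfies the Catoni-type bounds −log(1 − u + 2u²) ≤ ψ(u) ≤ log(1 + u + 2u²) for all real u. -/
/-!
ψ is the Gudermannian function, so ψ' = 1 / cosh, ψ(0) = 0 and ψ is odd; by oddness the lower
bound is the upper bound at −u. For the upper bound, F(u) = log(1 + u + 2u²) − ψ(u) vanishes at 0
and F'(u) = ((1 + 4u) cosh u − (1 + u + 2u²)) / (cosh u · (1 + u + 2u²)) has the sign of u, so 0 is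
the global minimum of F. The sign of the numerator follows from cosh u ≥ 1 + u²/2 for u ≥ 0, and
for −1/4 ≤ u ≤ 0 from cosh u ≤ 1 + u² (for u ≤ −1/4 the numerator is plainly negative).
-/

open Real

namespace Real

theorem one_add_sq_div_two_le_cosh (x : ℝ) : 1 + x ^ 2 / 2 ≤ cosh x := by
  have hsinh : |x| / 2 ≤ sinh (|x| / 2) := self_le_sinh_iff.mpr (by positivity)
  have hcosh : cosh |x| = 1 + 2 * sinh (|x| / 2) ^ 2 := by
    rw [show |x| = 2 * (|x| / 2) by ring, cosh_two_mul, cosh_sq]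
    ring_nf
  rw [← cosh_abs, hcosh, ← sq_abs x]
  nlinarith [abs_nonneg x]

theorem cosh_le_one_add_sq {x : ℝ} (hx : |x| ≤ 1) : cosh x ≤ 1 + x ^ 2 := by
  have hpos := abs_le.mp (abs_exp_sub_one_sub_id_le hx)
  have hneg := abs_le.mp (abs_exp_sub_one_sub_id_le (x := -x) (by rwa [abs_neg]))
  rw [cosh_eq]
  nlinarith [hpos.2, hneg.2]

end Real

theorem le_apply_of_deriv_nonpos_of_deriv_nonneg {f : ℝ → ℝ} {a : ℝ} (hf : Differentiable ℝ f)
    (hleft : ∀ x < a, deriv f x ≤ 0) (hright : ∀ x, a < x → 0 ≤ deriv f x) (u : ℝ) :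
    f a ≤ f u := by
  rcases le_total a u with hau | hua
  · refine monotoneOn_of_deriv_nonneg (convex_Ici a) hf.continuous.continuousOn
      hf.differentiableOn (fun x hx => hright x ?_) Set.self_mem_Ici hau hau
    rwa [interior_Ici] at hx
  · refine antitoneOn_of_deriv_nonpos (convex_Iic a) hf.continuous.continuousOn
      hf.differentiableOn (fun x hx => hleft x ?_) hua Set.self_mem_Iic hua
    rwa [interior_Iic] at hx

noncomputable def gudermannian (u : ℝ) : ℝ := 2 * arctan (exp u) - π / 2

theorem gudermannian_zero : gudermannian 0 = 0 := by
  rw [gudermannian, exp_zero, arctan_one]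
  ring

theorem gudermannian_neg (u : ℝ) : gudermannian (-u) = -gudermannian u := by
  rw [gudermannian, gudermannian, exp_neg, arctan_inv_of_pos (exp_pos u)]
  ring

theorem hasDerivAt_gudermannian (u : ℝ) : HasDerivAt gudermannian (cosh u)⁻¹ u := by
  have h := (((hasDerivAt_arctan (exp u)).comp u (hasDerivAt_exp u)).const_mul 2).sub_const (π / 2)
  refine (h : HasDerivAt gudermannian _ u).congr_deriv ?_
  rw [cosh_eq, exp_neg]
  field_simp
  ring

theorem catoni_quadratic_pos (u : ℝ) : 0 < 1 + u + 2 * u ^ 2 := by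
  nlinarith [sq_nonneg (4 * u + 1)]

theorem catoni_quadratic_le_mul_cosh {u : ℝ} (hu : 0 ≤ u) :
    1 + u + 2 * u ^ 2 ≤ (1 + 4 * u) * cosh u := by
  nlinarith [one_add_sq_div_two_le_cosh u, mul_nonneg hu (sq_nonneg (u - 1))]

theorem mul_cosh_le_catoni_quadratic {u : ℝ} (hu : u ≤ 0) :
    (1 + 4 * u) * cosh u ≤ 1 + u + 2 * u ^ 2 := by
  rcases le_total (1 + 4 * u) 0 with hneg | hnonneg
  · nlinarith [cosh_pos u, catoni_quadratic_pos u]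
  · have hc := cosh_le_one_add_sq (x := u) (by rw [abs_le]; constructor <;> linarith)
    nlinarith [one_le_cosh u]

theorem gudermannian_le_log_catoni_quadratic (u : ℝ) :
    gudermannian u ≤ log (1 + u + 2 * u ^ 2) := by
  set F : ℝ → ℝ := fun u => log (1 + u + 2 * u ^ 2) - gudermannian u
  have hF : ∀ x, HasDerivAt F ((1 + 4 * x) / (1 + x + 2 * x ^ 2) - (cosh x)⁻¹) x := by
    intro x
    have hq : HasDerivAt (fun x : ℝ => 1 + x + 2 * x ^ 2) (1 + 4 * x) x :=
      (((hasDerivAt_id x).const_add 1).add ((hasDerivAt_pow 2 x).const_mul 2)).congr_deriv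
        (by norm_num; ring)
    exact (hq.log (catoni_quadratic_pos x).ne').sub (hasDerivAt_gudermannian x)
  have hderiv (x : ℝ) : deriv F x =
      ((1 + 4 * x) * cosh x - (1 + x + 2 * x ^ 2)) / (cosh x * (1 + x + 2 * x ^ 2)) := by
    rw [(hF x).deriv, inv_eq_one_div,
      div_sub_div _ _ (catoni_quadratic_pos x).ne' (cosh_pos x).ne']
    ring
  have h := le_apply_of_deriv_nonpos_of_deriv_nonneg (f := F) (a := 0)
    (fun x => (hF x).differentiableAt) ?_ ?_ u
  · simpa [F, gudermannian_zero] using h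
  · intro x hx
    rw [hderiv]
    exact div_nonpos_of_nonpos_of_nonneg (sub_nonpos.mpr (mul_cosh_le_catoni_quadratic hx.le))
      (mul_pos (cosh_pos x) (catoni_quadratic_pos x)).le
  · intro x hx
    rw [hderiv]
    exact div_nonneg (sub_nonneg.mpr (catoni_quadratic_le_mul_cosh hx.le))
      (mul_pos (cosh_pos x) (catoni_quadratic_pos x)).le

theorem gudermannian_catoni_bounds (u : ℝ) :
    -Real.log (1 - u + 2 * u ^ 2) ≤ 2 * Real.arctan (Real.exp u) - Real.pi / 2 ∧
    2 * Real.arctan (Real.exp u) - Real.pi / 2 ≤ Real.log (1 + u + 2 * u ^ 2) := by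
  refine ⟨?_, gudermannian_le_log_catoni_quadratic u⟩
  have h := gudermannian_le_log_catoni_quadratic (-u)
  rw [gudermannian_neg, show 1 + -u + 2 * (-u) ^ 2 = 1 - u + 2 * u ^ 2 by ring] at h
  exact neg_le.mp h
end

section
/- Let σ² ≥ 0, s > 0, C > 0, n ≥ 1 and δ ∈ (0,1) satisfy D := 4(C²σ²/s² + C·log(1/δ)/n) ≤ 1. Then the quadratic (in u) equation m − u + (C/s)(σ² + (m − u)²) + (s/n)·log(1/δ) = 0 has two real solutions, and the smaller solution u₊ satisfies u₊ ≤ m + sD/(2C). -/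
/-!
Put `x = m - u`. The equation is the quadratic `(C/s) x² + x + ((C/s) σ² + (s/n) log(1/δ)) = 0`,
whose discriminant is exactly `1 - D`, so for `D ≤ 1` its roots in `u` are `m + s(1 ∓ √(1 - D))/(2C)`.
The smaller one is bounded using `1 - D ≤ √(1 - D)` for `0 ≤ D ≤ 1`.
-/

open Real

theorem catoni_quadratic_eq_zero_iff {m σ2 s C k L : ℝ} (hs : s ≠ 0) (hC : C ≠ 0)
    (hD : 4 * (C ^ 2 * σ2 / s ^ 2 + C * L / k) ≤ 1) (u : ℝ) :
    m - u + (C / s) * (σ2 + (m - u) ^ 2) + (s / k) * L = 0 ↔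
      u = m + s * (1 - √(1 - 4 * (C ^ 2 * σ2 / s ^ 2 + C * L / k))) / (2 * C) ∨
      u = m + s * (1 + √(1 - 4 * (C ^ 2 * σ2 / s ^ 2 + C * L / k))) / (2 * C) := by
  set r := √(1 - 4 * (C ^ 2 * σ2 / s ^ 2 + C * L / k))
  have hdiscrim : discrim (C / s) 1 ((C / s) * σ2 + (s / k) * L) = r * r := by
    rw [mul_self_sqrt (by linarith), discrim]
    field_simp
  have hquad := quadratic_eq_zero_iff (div_ne_zero hC hs) hdiscrim (m - u)
  have hden (a : ℝ) : a / (2 * (C / s)) = s * a / (2 * C) := by field_simp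
  rw [hden, hden] at hquad
  have hsmall : m - u = s * (-1 + r) / (2 * C) ↔ u = m + s * (1 - r) / (2 * C) := by
    constructor <;> intro h <;> linear_combination -h
  have hlarge : m - u = s * (-1 - r) / (2 * C) ↔ u = m + s * (1 + r) / (2 * C) := by
    constructor <;> intro h <;> linear_combination -h
  rw [← hsmall, ← hlarge, ← hquad]
  constructor <;> intro h <;> linear_combination h

theorem catoni_quadratic_roots_general (m σ2 s C : ℝ) (n : ℕ) (δ : ℝ)
    (hσ2 : 0 ≤ σ2) (hs : 0 < s) (hC : 0 < C) (hδ : δ ∈ Set.Ioo (0:ℝ) 1)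
    (hD : 4 * (C ^ 2 * σ2 / s ^ 2 + C * Real.log (1 / δ) / n) ≤ 1) :
    ∃ u₁ u₂ : ℝ, u₁ ≤ u₂ ∧
      (m - u₁ + (C / s) * (σ2 + (m - u₁) ^ 2) + (s / n) * Real.log (1 / δ) = 0) ∧
      (m - u₂ + (C / s) * (σ2 + (m - u₂) ^ 2) + (s / n) * Real.log (1 / δ) = 0) ∧
      (∀ u : ℝ, m - u + (C / s) * (σ2 + (m - u) ^ 2) + (s / n) * Real.log (1 / δ) = 0 →
        u₁ ≤ u) ∧
      u₁ ≤ m + s * (4 * (C ^ 2 * σ2 / s ^ 2 + C * Real.log (1 / δ) / n)) / (2 * C) := by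
  set D := 4 * (C ^ 2 * σ2 / s ^ 2 + C * Real.log (1 / δ) / n)
  have hlog : 0 ≤ Real.log (1 / δ) := Real.log_nonneg (one_le_one_div hδ.1 hδ.2.le)
  have hD0 : 0 ≤ D := by positivity
  have hroots := catoni_quadratic_eq_zero_iff (m := m) hs.ne' hC.ne' hD
  have hle : m + s * (1 - √(1 - D)) / (2 * C) ≤ m + s * (1 + √(1 - D)) / (2 * C) := by
    gcongr
    linarith [sqrt_nonneg (1 - D)]
  refine ⟨_, _, hle, (hroots _).2 (.inl rfl), (hroots _).2 (.inr rfl), fun u hu => ?_, ?_⟩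
  · rcases (hroots u).1 hu with rfl | rfl
    exacts [le_rfl, hle]
  · have hsqrt := le_sqrt_self_iff.2 (by linarith : 1 - D ≤ 1)
    gcongr
    linarith

theorem catoni_quadratic_roots (m σ2 s C : ℝ) (n : ℕ) (δ : ℝ)
    (hσ2 : 0 ≤ σ2) (hs : 0 < s) (hC : 0 < C) (hn : 1 ≤ n) (hδ : δ ∈ Set.Ioo (0:ℝ) 1)
    (hD : 4 * (C ^ 2 * σ2 / s ^ 2 + C * Real.log (1 / δ) / n) ≤ 1) :
    ∃ u₁ u₂ : ℝ, u₁ ≤ u₂ ∧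
      (m - u₁ + (C / s) * (σ2 + (m - u₁) ^ 2) + (s / n) * Real.log (1 / δ) = 0) ∧
      (m - u₂ + (C / s) * (σ2 + (m - u₂) ^ 2) + (s / n) * Real.log (1 / δ) = 0) ∧
      (∀ u : ℝ, m - u + (C / s) * (σ2 + (m - u) ^ 2) + (s / n) * Real.log (1 / δ) = 0 →
        u₁ ≤ u) ∧
      u₁ ≤ m + s * (4 * (C ^ 2 * σ2 / s ^ 2 + C * Real.log (1 / δ) / n)) / (2 * C) :=
  catoni_quadratic_roots_general m σ2 s C n δ hσ2 hs hC hδ hD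
end

section
/- Suppose for each u ∈ ℝ the event {(s/n)Σᵢ ψₛ(xᵢ − u) ≤ b(u) + (s/n)log(1/δ)} holds, where b(u) = m − u + (C/s)(σ² + (m−u)²), ψ is strictly increasing, and θ̂ satisfies Σᵢ ψₛ(xᵢ − θ̂) = 0. If D := 4(C²σ²/s² + C log(1/δ)/n) ≤ 1, then on the intersection of this event at u₊ (the smaller root of b(u) + (s/n)log(1/δ) = 0) with the symmetric lower-tail event, one has |θ̂ − m| ≤ 2(Cσ²/s + s·log(1/δ)/n). -/
/-!
The map `u ↦ ∑ ψ((xᵢ - u)/s)` is strictly decreasing and vanishes at `θ̂`, so `θ̂ ≤ m + B` as soon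
as the sum is nonpositive at `m + B`, and `m - B ≤ θ̂` as soon as it is nonnegative at `m - B`.
With `B = 2(Cσ²/s + s log(1/δ)/n)` the two tail bounds give exactly these signs: writing
`a = C/s` and `t = s log(1/δ)/n`, one has `aσ² + t = B/2`, and `D ≤ 1` says `aB ≤ 1/2`,
so `aB² ≤ B/2` and the quadratic `a(σ² + B²) + t - B` is nonpositive.
-/

theorem strictAnti_sum_comp_sub_div {ι : Type*} {S : Finset ι} (hS : S.Nonempty) (x : ι → ℝ)
    {ψ : ℝ → ℝ} (hψ : StrictMono ψ) {s : ℝ} (hs : 0 < s) :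
    StrictAnti fun u : ℝ => ∑ i ∈ S, ψ ((x i - u) / s) := fun _ _ huv =>
  Finset.sum_lt_sum_of_nonempty hS fun i _ =>
    hψ <| div_lt_div_of_pos_right (sub_lt_sub_left huv (x i)) hs

theorem mul_add_sq_add_le_of_four_mul_le_one {a σ2 t : ℝ} (ha : 0 ≤ a) (hσ2 : 0 ≤ σ2)
    (ht : 0 ≤ t) (h : 4 * (a ^ 2 * σ2 + a * t) ≤ 1) :
    a * (σ2 + (2 * (a * σ2 + t)) ^ 2) + t ≤ 2 * (a * σ2 + t) := by
  set B := 2 * (a * σ2 + t) with hB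
  have hB_nonneg : 0 ≤ B := by positivity
  have haB : a * B ≤ 1 / 2 := by linarith
  have haB2 : a * B ^ 2 ≤ B / 2 := by
    calc a * B ^ 2 = (a * B) * B := by ring
      _ ≤ (1 / 2) * B := mul_le_mul_of_nonneg_right haB hB_nonneg
      _ = B / 2 := by ring
  linarith

theorem mest_deviation_bound {n : ℕ} (hn : 1 ≤ n) (x : Fin n → ℝ)
    (ψ : ℝ → ℝ) (hψ : StrictMono ψ) (s C δ m σ2 : ℝ)
    (hs : 0 < s) (hC : 0 < C) (hδ : δ ∈ Set.Ioo (0:ℝ) 1) (hσ2 : 0 ≤ σ2)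
    (hD : 4 * (C ^ 2 * σ2 / s ^ 2 + C * Real.log (1 / δ) / n) ≤ 1)
    (hub : ∀ u : ℝ, (s / n) * ∑ i, ψ ((x i - u) / s) ≤
      (m - u + (C / s) * (σ2 + (m - u) ^ 2)) + (s / n) * Real.log (1 / δ))
    (hlb : ∀ u : ℝ, (m - u - (C / s) * (σ2 + (m - u) ^ 2)) - (s / n) * Real.log (1 / δ) ≤
      (s / n) * ∑ i, ψ ((x i - u) / s))
    (θhat : ℝ) (hroot : ∑ i, ψ ((x i - θhat) / s) = 0) :
    |θhat - m| ≤ 2 * (C * σ2 / s + s * Real.log (1 / δ) / n) := by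
  have hn_pos : (0 : ℝ) < n := by exact_mod_cast hn
  have hsn : 0 < s / n := by positivity
  have hL : 0 ≤ Real.log (1 / δ) := Real.log_nonneg <| (one_le_div hδ.1).mpr hδ.2.le
  have hB : 2 * (C * σ2 / s + s * Real.log (1 / δ) / n) =
      2 * (C / s * σ2 + s / n * Real.log (1 / δ)) := by ring
  have hD' : 4 * ((C / s) ^ 2 * σ2 + C / s * (s / n * Real.log (1 / δ))) ≤ 1 := by
    convert hD using 3 <;> field_simp
  have hbudget := mul_add_sq_add_le_of_four_mul_le_one (by positivity) hσ2 (by positivity) hD'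
  rw [hB]
  set B := 2 * (C / s * σ2 + s / n * Real.log (1 / δ))
  have hanti := strictAnti_sum_comp_sub_div (Finset.univ_nonempty_iff.mpr ⟨⟨0, hn⟩⟩) x hψ hs
  have hupper : ∑ i, ψ ((x i - (m + B)) / s) ≤ ∑ i, ψ ((x i - θhat) / s) := by
    have := hub (m + B)
    rw [hroot]
    exact nonpos_of_mul_nonpos_right (by nlinarith) hsn
  have hlower : ∑ i, ψ ((x i - θhat) / s) ≤ ∑ i, ψ ((x i - (m - B)) / s) := by
    have := hlb (m - B)
    rw [hroot]
    exact nonneg_of_mul_nonneg_right (by nlinarith) hsn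
  have hθ_le : θhat ≤ m + B := hanti.le_iff_ge.mp hupper
  have hθ_ge : m - B ≤ θhat := hanti.le_iff_ge.mp hlower
  exact abs_sub_le_iff.mpr ⟨by linarith, by linarith⟩
end
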